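/- arXiv:2107.02748 — 8 statements merged into one kernel-verified Lean document; each statement's English description precedes it below -/
import Mathlib

section
/- Let ℓ be a literal of a variable x, let t ≥ 8, and let S be the CNF formula consisting of the clauses (ℓ ∨ a_1 ∨ b_1), …, (ℓ ∨ a_t ∨ b_t), (u ∨ v ∨ w), where a_1, b_1, …, a_t, b_t are literals of 2t pairwise distinct variables all different from x, u, v, w are literals of three distinct variables, and the literal ℓ does not occur in the clause (u ∨ v ∨ w) (though ¬ℓ may occur in it). Then #SAT(S) < 2^{r−1}, where r is the total number of distinct variables occurring in S. -/
/-- A literal over `n` Boolean variables: a variable together with a polarity. -/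
abbrev Lit (n : ℕ) := Fin n × Bool

/-- A clause: a finite set of literals (interpreted as their disjunction). -/
abbrev Clause (n : ℕ) := Finset (Lit n)

/-- A CNF formula: a finite set of clauses (interpreted as their conjunction). -/
abbrev Cnf (n : ℕ) := Finset (Clause n)

/-- An assignment satisfies a clause if some literal of the clause is true. -/
def clauseSat {n : ℕ} (A : Fin n → Bool) (C : Clause n) : Prop :=
  ∃ l ∈ C, A l.1 = l.2

/-- An assignment satisfies a CNF if it satisfies every clause. -/
def cnfSat {n : ℕ} (A : Fin n → Bool) (F : Cnf n) : Prop :=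
  ∀ C ∈ F, clauseSat A C

/-- `numSat F` is the number of satisfying assignments of `F` (out of `2^n`). -/
noncomputable def numSat {n : ℕ} (F : Cnf n) : ℕ :=
  Nat.card {A : Fin n → Bool // cnfSat A F}

/-- The set of variables occurring in a clause. -/
def clVars {n : ℕ} (C : Clause n) : Finset (Fin n) := C.image Prod.fst

/-- A finite set of literals has pairwise distinct variables. -/
def distinctVars {n : ℕ} (C : Clause n) : Prop :=
  ∀ l ∈ C, ∀ l' ∈ C, l.1 = l'.1 → l = l'

/-- A set of clauses is variable-disjoint if no two distinct clauses share a variable. -/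
def varDisjoint {n : ℕ} (S : Finset (Clause n)) : Prop :=
  ∀ C ∈ S, ∀ C' ∈ S, C ≠ C' → Disjoint (clVars C) (clVars C')

/-- `S` is a `w`-sunflower: there is a core `L` of `w` distinct literals contained in every
clause, and removing the core from each clause yields a variable-disjoint set. -/
def isSunflower {n : ℕ} (S : Finset (Clause n)) (w : ℕ) : Prop :=
  ∃ L : Finset (Lit n), L.card = w ∧ (∀ C ∈ S, L ⊆ C) ∧
    ∀ C ∈ S, ∀ C' ∈ S, C ≠ C' → Disjoint (clVars (C \ L)) (clVars (C' \ L))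

/-- A set of literals is consistent if it never contains both a variable and its negation. -/
def consistentLits {n : ℕ} (L : Finset (Lit n)) : Prop :=
  ∀ x : Fin n, ¬((x, true) ∈ L ∧ (x, false) ∈ L)

/-!
Split the satisfying assignments according to the value of the literal `ℓ = (x, bx)`.
If `ℓ` is true, the clause `u ∨ v ∨ w` must hold. Since `ℓ ∉ {u, v, w}`, making `ℓ` true and
`u, v, w` false is consistent and fixes at most four variables, so at least `2^(n-4)` of the
`2^(n-1)` assignments with `ℓ` true are lost. If `ℓ` is false, each of the `t` variable-disjoint
pairs `a_i ∨ b_i` must hold, which leaves exactly `3^t · 2^(n-2t-1)` assignments; this is less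
than `2^(n-4)` because `8 · 3^t < 4^t` for `t ≥ 8`.

Counts are stated in the form `#s * k ^ a = m * k ^ b` to avoid truncated subtraction.
-/

open Finset Function

theorem card_filter_comp_mul_pow {α β γ : Type*} [Fintype α] [DecidableEq α] [Fintype β]
    [DecidableEq β] [Fintype γ] {g : α → β} (hg : Injective g) (Q : (α → γ) → Prop)
    [DecidablePred Q] :
    #{A : β → γ | Q (A ∘ g)} * Fintype.card γ ^ Fintype.card α
      = #{f : α → γ | Q f} * Fintype.card γ ^ Fintype.card β := by
  let e : (β → γ) ≃ (α → γ) × ({y // y ∉ Set.range g} → γ) :=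
    (Equiv.piEquivPiSubtypeProd (· ∈ Set.range g) fun _ => γ).trans
      (Equiv.prodCongr ((Equiv.ofInjective g hg).arrowCongr (Equiv.refl γ)).symm (Equiv.refl _))
  have hsplit : #{A : β → γ | Q (A ∘ g)}
      = #{f : α → γ | Q f} * Fintype.card γ ^ Fintype.card {y // y ∉ Set.range g} := by
    simp only [← Fintype.card_subtype, ← Fintype.card_fun, ← Fintype.card_prod]
    exact Fintype.card_congr ((e.subtypeEquiv fun A => Iff.rfl).trans
      Equiv.prodSubtypeFstEquivSubtypeProd)
  have hpow := Fintype.card_congr e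
  simp only [Fintype.card_fun, Fintype.card_prod] at hpow
  rw [hsplit, hpow]
  ring

theorem card_filter_forall_mem_apply_eq_mul_pow {β γ : Type*} [Fintype β] [DecidableEq β]
    [Fintype γ] [DecidableEq γ] (D : Finset β) (c : β → γ) :
    #{A : β → γ | ∀ y ∈ D, A y = c y} * Fintype.card γ ^ #D
      = Fintype.card γ ^ Fintype.card β := by
  have h := card_filter_comp_mul_pow (Subtype.val_injective (p := (· ∈ D)))
    (fun f => f = fun y => c y.1)
  rw [Fintype.card_coe, filter_eq', if_pos (mem_univ _), card_singleton, one_mul] at h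
  rw [← h]
  congr 3
  ext A
  simp [funext_iff]

theorem card_filter_apply_eq_mul_two {β : Type*} [Fintype β] [DecidableEq β] (x : β) (b : Bool) :
    #{A : β → Bool | A x = b} * 2 = 2 ^ Fintype.card β := by
  simpa using card_filter_forall_mem_apply_eq_mul_pow {x} fun _ => b

theorem card_filter_apply_eq_and_comp_mul_pow {α β γ : Type*} [Fintype α] [DecidableEq α]
    [Fintype β] [DecidableEq β] [Fintype γ] [DecidableEq γ] {g : α → β} (hg : Injective g)
    {x : β} (hx : ∀ a, g a ≠ x) (c : γ) (Q : (α → γ) → Prop) [DecidablePred Q] :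
    #{A : β → γ | A x = c ∧ Q (A ∘ g)} * Fintype.card γ ^ (Fintype.card α + 1)
      = #{f : α → γ | Q f} * Fintype.card γ ^ Fintype.card β := by
  have hg' : Injective fun o : Option α => o.elim x g := by
    rintro (_ | a) (_ | b) h
    exacts [rfl, (hx b h.symm).elim, (hx a h).elim, congrArg some (hg h)]
  have h := card_filter_comp_mul_pow hg' fun f => f none = c ∧ Q (f ∘ some)
  rw [Fintype.card_option] at h
  change #{A : β → γ | (A ∘ fun o : Option α => o.elim x g) none = c ∧
    Q ((A ∘ fun o : Option α => o.elim x g) ∘ some)} * _ = _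
  rw [h]
  congr 1
  refine card_nbij' (· ∘ some) (fun f o => o.elim c f) ?_ ?_ ?_ ?_
  · intro f hf
    simp_all
  · intro f hf
    simp_all [comp_def]
  · intro f hf
    funext o
    cases o <;> simp_all
  · intro f _
    rfl

theorem card_filter_forall_or_eq_three_pow (ι : Type*) [Fintype ι] [DecidableEq ι]
    (a b : ι → Bool) :
    #{f : ι × Bool → Bool | ∀ i, f (i, true) = a i ∨ f (i, false) = b i}
      = 3 ^ Fintype.card ι := by
  let e : (ι × Bool → Bool) ≃ (ι → Bool × Bool) :=
    (Equiv.curry ι Bool Bool).trans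
      (Equiv.arrowCongr (Equiv.refl ι) (Equiv.boolArrowEquivProd Bool))
  have h3 : ∀ a b : Bool, #{p : Bool × Bool | p.2 = a ∨ p.1 = b} = 3 := by decide
  calc #{f : ι × Bool → Bool | ∀ i, f (i, true) = a i ∨ f (i, false) = b i}
      = #(Fintype.piFinset fun i => ({p : Bool × Bool | p.2 = a i ∨ p.1 = b i} : Finset _)) := by
        refine card_equiv e fun f => ?_
        simp [e]
    _ = 3 ^ Fintype.card ι := by simp [h3]

open Classical in
theorem two_pow_le_card_apply_eq_and_not_clauseSat {n : ℕ} {C : Clause n}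
    (hC : distinctVars C) {x : Fin n} {b : Bool} (hxC : (x, b) ∉ C) :
    2 ^ n ≤ #{A : Fin n → Bool | A x = b ∧ ¬clauseSat A C} * 2 ^ (#C + 1) := by
  -- `(x, b)` true and every literal of `C` false: consistent as `(x, b) ∉ C` and `distinctVars C`.
  let c : Fin n → Bool := fun y => if y = x then b else !decide ((y, true) ∈ C)
  have hsub : ({A | ∀ y ∈ insert x (clVars C), A y = c y} : Finset (Fin n → Bool))
      ⊆ ({A | A x = b ∧ ¬clauseSat A C} : Finset (Fin n → Bool)) := by
    intro A hA
    simp only [mem_filter, mem_univ, true_and, mem_insert, forall_eq_or_imp] at hA ⊢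
    refine ⟨by simpa [c] using hA.1, ?_⟩
    rintro ⟨⟨y, s⟩, hl, hAl⟩
    have hy := hA.2 y (mem_image_of_mem Prod.fst hl)
    have := hC (y, s) hl (y, true)
    by_cases hyx : y = x <;> cases s <;> simp_all [c]
  have hD : #(insert x (clVars C)) ≤ #C + 1 :=
    (card_insert_le _ _).trans (Nat.succ_le_succ card_image_le)
  calc 2 ^ n = #{A : Fin n → Bool | ∀ y ∈ insert x (clVars C), A y = c y}
        * 2 ^ #(insert x (clVars C)) := by
        simpa using (card_filter_forall_mem_apply_eq_mul_pow (insert x (clVars C)) c).symm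
    _ ≤ _ := Nat.mul_le_mul (card_le_card hsub) (Nat.pow_le_pow_right two_pos hD)

theorem eight_mul_three_pow_lt_four_pow {t : ℕ} (ht : 8 ≤ t) : 8 * 3 ^ t < 4 ^ t := by
  induction t, ht using Nat.le_induction with
  | base => norm_num
  | succ k _ ih => rw [pow_succ, pow_succ]; omega

section PairClauses

variable {n t : ℕ} {x : Fin n} {av bv : Fin t → Fin n}

theorem card_filter_apply_eq_and_forall_or_mul_pow
    (hinj : Injective fun p : Fin t × Bool => if p.2 then av p.1 else bv p.1)
    (hax : ∀ i, av i ≠ x) (hbx : ∀ i, bv i ≠ x) (c : Bool) (sa sb : Fin t → Bool) :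
    #{A : Fin n → Bool | A x = c ∧ ∀ i, A (av i) = sa i ∨ A (bv i) = sb i} * 2 ^ (2 * t + 1)
      = 3 ^ t * 2 ^ n := by
  have h := card_filter_apply_eq_and_comp_mul_pow hinj (x := x)
    (by rintro ⟨i, _ | _⟩ <;> simp [hax, hbx]) c
    fun f => ∀ i, f (i, true) = sa i ∨ f (i, false) = sb i
  simp only [comp_apply, if_true, Bool.false_eq_true, if_false] at h
  -- `convert` reconciles the two `Decidable (∀ i : Fin t, _)` instances that arise here.
  rw [show #{f : Fin t × Bool → Bool | ∀ i, f (i, true) = sa i ∨ f (i, false) = sb i} = 3 ^ t by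
    convert card_filter_forall_or_eq_three_pow (Fin t) sa sb
    exact (Fintype.card_fin t).symm] at h
  simpa [mul_comm] using h

theorem card_filter_apply_eq_and_forall_or_mul_sixteen_lt (ht : 8 ≤ t)
    (hinj : Injective fun p : Fin t × Bool => if p.2 then av p.1 else bv p.1)
    (hax : ∀ i, av i ≠ x) (hbx : ∀ i, bv i ≠ x) (c : Bool) (sa sb : Fin t → Bool) :
    #{A : Fin n → Bool | A x = c ∧ ∀ i, A (av i) = sa i ∨ A (bv i) = sb i} * 16 < 2 ^ n := by
  refine Nat.lt_of_mul_lt_mul_right (a := 2 ^ (2 * t + 1)) ?_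
  calc _ = 16 * 3 ^ t * 2 ^ n := by
        rw [mul_right_comm, card_filter_apply_eq_and_forall_or_mul_pow hinj hax hbx]
        ring
    _ < 2 ^ (2 * t + 1) * 2 ^ n := by
        gcongr
        rw [pow_succ, pow_mul, show (2 : ℕ) ^ 2 = 4 by norm_num]
        linarith [eight_mul_three_pow_lt_four_pow ht]
    _ = _ := mul_comm _ _

theorem apply_eq_and_clauseSat_or_of_cnfSat {bx : Bool} {sa sb : Fin t → Bool} {C : Clause n}
    {A : Fin n → Bool}
    (hA : cnfSat A (insert C (image (fun i : Fin t =>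
      ({(x, bx), (av i, sa i), (bv i, sb i)} : Clause n)) univ))) :
    (A x = bx ∧ clauseSat A C) ∨ (A x = !bx ∧ ∀ i, A (av i) = sa i ∨ A (bv i) = sb i) := by
  by_cases hx : A x = bx
  · exact .inl ⟨hx, hA C (mem_insert_self _ _)⟩
  refine .inr ⟨Bool.eq_not_iff.2 hx, fun i => ?_⟩
  obtain ⟨l, hl, hAl⟩ := hA _ (mem_insert_of_mem (mem_image_of_mem _ (mem_univ i)))
  simp only [mem_insert, mem_singleton] at hl
  rcases hl with rfl | rfl | rfl
  exacts [(hx hAl).elim, .inl hAl, .inr hAl]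

open Classical in
theorem numSat_insert_image_le (bx : Bool) (sa sb : Fin t → Bool) (C : Clause n) :
    numSat (insert C (image (fun i : Fin t =>
      ({(x, bx), (av i, sa i), (bv i, sb i)} : Clause n)) univ))
      ≤ #{A : Fin n → Bool | A x = bx ∧ clauseSat A C}
        + #{A : Fin n → Bool | A x = !bx ∧ ∀ i, A (av i) = sa i ∨ A (bv i) = sb i} := by
  rw [numSat, Nat.card_eq_fintype_card, Fintype.card_subtype]
  refine (card_le_card (monotone_filter_right _ fun A _ hA =>
    apply_eq_and_clauseSat_or_of_cnfSat hA)).trans ?_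
  rw [filter_or]
  exact card_union_le _ _

end PairClauses

theorem stmt5_general (n t : ℕ) (ht : 8 ≤ t)
    (x : Fin n) (bx : Bool)
    (av bv : Fin t → Fin n) (sa sb : Fin t → Bool)
    (u v w : Lit n)
    (hinj : Function.Injective (fun p : Fin t × Bool => if p.2 then av p.1 else bv p.1))
    (hax : ∀ i, av i ≠ x) (hbx : ∀ i, bv i ≠ x)
    (huv : u.1 ≠ v.1) (huw : u.1 ≠ w.1) (hvw : v.1 ≠ w.1)
    (hlu : (x, bx) ≠ u) (hlv : (x, bx) ≠ v) (hlw : (x, bx) ≠ w)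
    (S : Cnf n)
    (hS : S = insert ({u, v, w} : Clause n)
        (Finset.image (fun i : Fin t =>
          ({(x, bx), (av i, sa i), (bv i, sb i)} : Clause n)) Finset.univ)) :
    numSat S < 2^(n - 1) := by
  classical
  have hdist : distinctVars ({u, v, w} : Clause n) := by
    simp only [distinctVars, mem_insert, mem_singleton]
    grind
  have hlost : 2 ^ n ≤ #{A : Fin n → Bool | A x = bx ∧ ¬clauseSat A {u, v, w}} * 2 ^ 4 :=
    (two_pow_le_card_apply_eq_and_not_clauseSat hdist (x := x) (b := bx)
      (by simp [hlu, hlv, hlw])).trans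
      (by gcongr; exacts [one_le_two, Nat.succ_le_succ card_le_three])
  have hfalse := card_filter_apply_eq_and_forall_or_mul_sixteen_lt ht hinj hax hbx (!bx) sa sb
  have hsplit := hS ▸ numSat_insert_image_le bx sa sb {u, v, w}
  have hhalf : #{A : Fin n → Bool | A x = bx ∧ clauseSat A {u, v, w}}
      + #{A : Fin n → Bool | A x = bx ∧ ¬clauseSat A {u, v, w}}
      = #{A : Fin n → Bool | A x = bx} := by
    simp only [← filter_filter]
    exact card_filter_add_card_filter_not _
  have htwo := card_filter_apply_eq_mul_two x bx
  rw [Fintype.card_fin] at htwo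
  have hn : 2 ^ n = 2 ^ (n - 1) * 2 := by rw [← pow_succ, Nat.sub_add_cancel x.pos]
  omega

/-- For `t ≥ 8`, the CNF `S` with clauses `(ℓ ∨ a_i ∨ b_i)` for `1 ≤ i ≤ t` (the `a_i, b_i`
on `2t` pairwise distinct variables different from the variable of `ℓ`) together with one
clause `(u ∨ v ∨ w)` on three distinct variables not containing the literal `ℓ`, has fewer
than `2^{r-1}` satisfying assignments, where `r` is its total number of variables (here
every variable occurs in `S`, so `r = n`). -/
theorem stmt5 (n t : ℕ) (ht : 8 ≤ t)
    (x : Fin n) (bx : Bool)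
    (av bv : Fin t → Fin n) (sa sb : Fin t → Bool)
    (u v w : Lit n)
    (hinj : Function.Injective (fun p : Fin t × Bool => if p.2 then av p.1 else bv p.1))
    (hax : ∀ i, av i ≠ x) (hbx : ∀ i, bv i ≠ x)
    (huv : u.1 ≠ v.1) (huw : u.1 ≠ w.1) (hvw : v.1 ≠ w.1)
    (hlu : (x, bx) ≠ u) (hlv : (x, bx) ≠ v) (hlw : (x, bx) ≠ w)
    (S : Cnf n)
    (hS : S = insert ({u, v, w} : Clause n)
        (Finset.image (fun i : Fin t =>
          ({(x, bx), (av i, sa i), (bv i, sb i)} : Clause n)) Finset.univ))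
    (hall : ∀ y : Fin n, ∃ C ∈ S, y ∈ clVars C) :
    numSat S < 2^(n - 1) :=
  stmt5_general n t ht x bx av bv sa sb u v w hinj hax hbx huv huw hvw hlu hlv hlw S hS
end

section
/- Let ρ ∈ (0,1) be a rational number and let m be a positive integer. Then there exists a real number η > 0, depending only on ρ and m, such that for every positive integer n and every integer N that is a sum of at most m powers of two: if N < ρ·2^n, then N ≤ (ρ − η)·2^n. -/
/-!
Dividing by `2^n`, it suffices to show that for every real `ρ` and every `s`, the sums of at most
`s` integer powers `b^k` that lie below `ρ` stay a fixed distance below `ρ`. Induct on `s`: once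
`b^(-K)` is small compared to the gap `η` for `s` terms, a sum of `s + 1` terms either contains a
term `b^k < b^(-K)`, and dropping it falls back on the gap `η`, or it lies in the lattice
`b^(-K) ℤ`, which has a largest point below `ρ`.
-/

/-- `N` is a sum of at most `m` powers of two (repetitions allowed). -/
def IsSumOfPowsTwo (m : ℕ) (N : ℤ) : Prop :=
  ∃ l : Multiset ℕ, l.card ≤ m ∧ N = (l.map (fun j => (2 : ℤ)^j)).sum

open Multiset

lemma exists_pos_forall_int_mul_lt_imp_le_sub (r c : ℝ) (hc : 0 < c) :
    ∃ δ > 0, ∀ a : ℤ, a * c < r → a * c ≤ r - δ := by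
  refine ⟨r - (⌈r / c⌉ - 1) * c, ?_, fun a ha => ?_⟩
  · have : ((⌈r / c⌉ : ℝ) - 1) * c < r := by
      rw [← lt_div_iff₀ hc]
      linarith [Int.ceil_lt_add_one (r / c)]
    linarith
  · have ha' : a < ⌈r / c⌉ := Int.lt_ceil.mpr (by rwa [lt_div_iff₀ hc])
    have : (a : ℝ) ≤ ⌈r / c⌉ - 1 := by exact_mod_cast Int.le_sub_one_of_lt ha'
    nlinarith

lemma exists_int_sum_map_zpow_eq_mul (b : ℕ) (hb : b ≠ 0) (K : ℕ) (l : Multiset ℤ)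
    (hl : ∀ k ∈ l, -(K : ℤ) ≤ k) :
    ∃ a : ℤ, (l.map fun k => (b : ℝ) ^ k).sum = a * (b : ℝ) ^ (-(K : ℤ)) := by
  refine ⟨(l.map fun k => (b : ℤ) ^ (k + (K : ℤ)).toNat).sum, ?_⟩
  rw [Int.cast_multiset_sum, ← sum_map_mul_right, map_map]
  refine congrArg sum (map_congr rfl fun k hk => ?_)
  have hb' : (b : ℝ) ≠ 0 := Nat.cast_ne_zero.mpr hb
  rw [Function.comp_apply, Int.cast_pow, Int.cast_natCast, ← zpow_natCast,
    Int.toNat_of_nonneg (by linarith [hl k hk]), ← zpow_add₀ hb', add_neg_cancel_right]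

theorem exists_pos_sum_map_zpow_le_sub_of_lt (b : ℕ) (hb : 1 < b) (ρ : ℝ) (s : ℕ) :
    ∃ η > 0, ∀ l : Multiset ℤ, card l ≤ s →
      (l.map fun k => (b : ℝ) ^ k).sum < ρ → (l.map fun k => (b : ℝ) ^ k).sum ≤ ρ - η := by
  have hb' : (1 : ℝ) < b := by exact_mod_cast hb
  induction s with
  | zero =>
    obtain ⟨δ, hδ, hgap⟩ := exists_pos_forall_int_mul_lt_imp_le_sub ρ 1 one_pos
    refine ⟨δ, hδ, fun l hl hlt => ?_⟩
    rw [card_eq_zero.mp (Nat.le_zero.mp hl)] at hlt ⊢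
    simpa using hgap 0 (by simpa using hlt)
  | succ s ih =>
    obtain ⟨η, hη, hgap_s⟩ := ih
    obtain ⟨K, hK⟩ : ∃ K : ℕ, (b : ℝ) ^ (-(K : ℤ)) < η / 2 := by
      simp only [zpow_neg, zpow_natCast, ← inv_pow]
      exact exists_pow_lt_of_lt_one (half_pos hη) (inv_lt_one_of_one_lt₀ hb')
    obtain ⟨δ, hδ, hgap_K⟩ :=
      exists_pos_forall_int_mul_lt_imp_le_sub ρ ((b : ℝ) ^ (-(K : ℤ))) (by positivity)
    refine ⟨min δ (η / 2), lt_min hδ (half_pos hη), fun l hl hlt => ?_⟩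
    by_cases hlattice : ∀ k ∈ l, -(K : ℤ) ≤ k
    · obtain ⟨a, ha⟩ := exists_int_sum_map_zpow_eq_mul b (by omega) K l hlattice
      rw [ha] at hlt ⊢
      linarith [hgap_K a hlt, min_le_left δ (η / 2)]
    · push Not at hlattice
      obtain ⟨k, hk, hkK⟩ := hlattice
      obtain ⟨t, rfl⟩ := exists_cons_of_mem hk
      rw [map_cons, sum_cons] at hlt ⊢
      have hsmall : (b : ℝ) ^ k < η / 2 := (zpow_lt_zpow_right₀ hb' hkK).trans hK
      have ht := hgap_s t (by simpa using hl) (by linarith [zpow_pos (by linarith : (0 : ℝ) < b) k])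
      linarith [min_le_right δ (η / 2)]

lemma cast_sum_map_pow_eq_sum_map_zpow_sub_mul (b : ℕ) (hb : b ≠ 0) (n : ℕ) (l : Multiset ℕ) :
    (((l.map fun j => (b : ℤ) ^ j).sum : ℤ) : ℝ) =
      ((l.map fun j : ℕ => (j : ℤ) - n).map fun k => (b : ℝ) ^ k).sum * (b : ℝ) ^ n := by
  have hb' : (b : ℝ) ≠ 0 := Nat.cast_ne_zero.mpr hb
  rw [Int.cast_multiset_sum, ← sum_map_mul_right, map_map, map_map]
  refine congrArg sum (map_congr rfl fun j _ => ?_)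
  simp [zpow_sub₀ hb', hb']

theorem stmt6_general (ρ : ℚ) (m : ℕ) :
    ∃ η : ℝ, 0 < η ∧ ∀ n : ℕ, 1 ≤ n → ∀ N : ℤ, IsSumOfPowsTwo m N →
      (N : ℝ) < (ρ : ℝ) * 2^n → (N : ℝ) ≤ ((ρ : ℝ) - η) * 2^n := by
  obtain ⟨η, hη, hgap⟩ := exists_pos_sum_map_zpow_le_sub_of_lt 2 one_lt_two ρ m
  refine ⟨η, hη, fun n _ N ⟨l, hl, hN⟩ hlt => ?_⟩
  have hscale := cast_sum_map_pow_eq_sum_map_zpow_sub_mul 2 two_ne_zero n l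
  simp only [Nat.cast_ofNat] at hscale hgap
  rw [hN, hscale] at hlt ⊢
  have hpow : (0 : ℝ) < 2 ^ n := by positivity
  exact mul_le_mul_of_nonneg_right
    (hgap _ (by simpa using hl) (lt_of_mul_lt_mul_right hlt hpow.le)) hpow.le

/-- For every rational `ρ ∈ (0,1)` and positive integer `m` there is `η > 0` such that for
all `n ≥ 1` and every integer `N` which is a sum of at most `m` powers of two:
if `N < ρ·2^n` then `N ≤ (ρ - η)·2^n`. -/
theorem stmt6 (ρ : ℚ) (hρ0 : 0 < ρ) (hρ1 : ρ < 1) (m : ℕ) (hm : 1 ≤ m) :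
    ∃ η : ℝ, 0 < η ∧ ∀ n : ℕ, 1 ≤ n → ∀ N : ℤ, IsSumOfPowsTwo m N →
      (N : ℝ) < (ρ : ℝ) * 2^n → (N : ℝ) ≤ ((ρ : ℝ) - η) * 2^n :=
  stmt6_general ρ m
end

section
/- Let ρ = a/b ∈ (0,1) with a, b positive integers and gcd(a,b) = 1, and let m be a positive integer. Then for every positive integer n and every integer N that is a sum of at most m powers of two: if N < ρ·2^n, then N ≤ ρ·(1 − 2^{−(b−1)m})·2^n. -/
lemma IsSumOfPowsTwo.exists_sorted_list {m : ℕ} {N : ℤ} (h : IsSumOfPowsTwo m N) :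
    ∃ L : List ℕ, L.Pairwise (· ≤ ·) ∧ L.length ≤ m ∧ N = (L.map (fun j => (2 : ℤ)^j)).sum := by
  obtain ⟨l, hcard, rfl⟩ := h
  refine ⟨l.sort (· ≤ ·), l.pairwise_sort (· ≤ ·), (l.length_sort (· ≤ ·)).symm ▸ hcard, ?_⟩
  conv_lhs => rw [← l.sort_eq (· ≤ · : ℕ → ℕ → Prop)]
  rw [Multiset.map_coe, Multiset.sum_coe]

lemma succ_le_two_pow_pred {b : ℕ} (hb : 3 ≤ b) : b + 1 ≤ 2 ^ (b - 1) := by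
  have h : 2 ^ (b - 1) = 2 * 2 ^ (b - 2) := by rw [← pow_succ']; congr 1; omega
  have : b - 2 < 2 ^ (b - 2) := Nat.lt_two_pow_self
  omega

lemma pow_dvd_sum_map_two_pow {j : ℕ} {L : List ℕ} (hL : ∀ i ∈ L, j ≤ i) :
    (2 : ℤ) ^ j ∣ (L.map (fun i => (2 : ℤ)^i)).sum :=
  List.dvd_sum fun _ hx => by
    obtain ⟨i, hi, rfl⟩ := List.mem_map.mp hx
    exact pow_dvd_pow 2 (hL i hi)

lemma gap_add_le_two_pow_mul {a b j n : ℕ} {S : ℤ} (hb : 2 ≤ b) (hjn : j < n)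
    (hS : (2 : ℤ) ^ j ∣ S) (hD : 0 < (a : ℤ) * 2 ^ n - b * (2 ^ j + S)) :
    ((a : ℤ) * 2 ^ n - b * (2 ^ j + S)) + b * 2 ^ j
      ≤ 2 ^ (b - 1) * ((a : ℤ) * 2 ^ n - b * (2 ^ j + S)) := by
  set D := (a : ℤ) * 2 ^ n - b * (2 ^ j + S)
  have h2j : (0 : ℤ) < 2 ^ j := by positivity
  rcases hb.eq_or_lt with rfl | hb3
  · have hdvd : (2 : ℤ) ^ (j + 1) ∣ D := by
      obtain ⟨c, rfl⟩ := hS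
      refine dvd_sub ((pow_dvd_pow 2 hjn).mul_left _) ⟨1 + c, ?_⟩
      push_cast; ring
    have := Int.le_of_dvd hD hdvd
    rw [pow_succ] at this
    simp only [Nat.cast_ofNat, Nat.add_one_sub_one, pow_one]
    linarith
  · have hdvd : (2 : ℤ) ^ j ∣ D :=
      dvd_sub ((pow_dvd_pow 2 hjn.le).mul_left _) ((dvd_add dvd_rfl hS).mul_left _)
    have hDj := Int.le_of_dvd hD hdvd
    have hpow : (b : ℤ) + 1 ≤ 2 ^ (b - 1) := by exact_mod_cast succ_le_two_pow_pred hb3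
    nlinarith

lemma le_two_pow_mul_gap_of_pairwise {a b : ℕ} (ha : 0 < a) (hab : a < b) {L : List ℕ}
    (hL : L.Pairwise (· ≤ ·)) {n : ℕ}
    (hlt : (b : ℤ) * (L.map (fun j => (2 : ℤ)^j)).sum < a * 2 ^ n) :
    (a : ℤ) * 2 ^ n
      ≤ 2 ^ ((b - 1) * L.length) * (a * 2 ^ n - b * (L.map (fun j => (2 : ℤ)^j)).sum) := by
  induction L with
  | nil => simp
  | cons j L ih =>
    obtain ⟨hjL, hL⟩ := List.pairwise_cons.mp hL
    set S := (L.map (fun i => (2 : ℤ)^i)).sum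
    simp only [List.map_cons, List.sum_cons, List.length_cons] at hlt ⊢
    have hS0 : 0 ≤ S := List.sum_nonneg fun _ hx => by
      obtain ⟨i, -, rfl⟩ := List.mem_map.mp hx
      positivity
    have hjn : j < n := by
      have : (b : ℤ) * 2 ^ j < b * 2 ^ n := by
        have : (a : ℤ) < b := by exact_mod_cast hab
        nlinarith [pow_pos (two_pos : (0 : ℤ) < 2) n]
      exact (pow_lt_pow_iff_right₀ one_lt_two).mp (lt_of_mul_lt_mul_left this (by positivity))
    have hstep := gap_add_le_two_pow_mul (by omega) hjn (pow_dvd_sum_map_two_pow hjL)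
      (sub_pos.mpr hlt)
    have hIH := ih hL (by nlinarith [pow_pos (two_pos : (0 : ℤ) < 2) j])
    calc (a : ℤ) * 2 ^ n ≤ 2 ^ ((b - 1) * L.length) * (a * 2 ^ n - b * S) := hIH
      _ ≤ 2 ^ ((b - 1) * L.length) * (2 ^ (b - 1) * (a * 2 ^ n - b * (2 ^ j + S))) := by
          gcongr
          linarith
      _ = 2 ^ ((b - 1) * (L.length + 1)) * (a * 2 ^ n - b * (2 ^ j + S)) := by ring

theorem stmt7_general (a b : ℕ) (ha : 0 < a) (hlt : a < b)
    (m : ℕ) :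
    ∀ n : ℕ, 1 ≤ n → ∀ N : ℤ, IsSumOfPowsTwo m N →
      (N : ℝ) < ((a : ℝ) / b) * 2^n →
      (N : ℝ) ≤ ((a : ℝ) / b) * (1 - ((2 : ℝ)^((b - 1) * m))⁻¹) * 2^n := by
  intro n _ N hN hNlt
  obtain ⟨L, hL, hlen, rfl⟩ := hN.exists_sorted_list
  set N := (L.map (fun j => (2 : ℤ)^j)).sum
  have hbR : (0 : ℝ) < b := by exact_mod_cast ha.trans hlt
  have hltZ : (b : ℤ) * N < a * 2 ^ n := by
    rw [div_mul_eq_mul_div, lt_div_iff₀ hbR, mul_comm] at hNlt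
    exact_mod_cast hNlt
  have hkey : (a : ℤ) * 2 ^ n ≤ 2 ^ ((b - 1) * m) * (a * 2 ^ n - b * N) :=
    (le_two_pow_mul_gap_of_pairwise ha hlt hL hltZ).trans <| by
      gcongr
      exact one_le_two
  have hkeyR : (a : ℝ) * 2 ^ n ≤ 2 ^ ((b - 1) * m) * (a * 2 ^ n - b * N) := by exact_mod_cast hkey
  rw [div_mul_eq_mul_div, div_mul_eq_mul_div, le_div_iff₀ hbR]
  field_simp
  linarith

/-- Effective version: for `ρ = a/b ∈ (0,1)` in lowest terms and `m ≥ 1`, every integer `N`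
which is a sum of at most `m` powers of two with `N < ρ·2^n` satisfies
`N ≤ ρ·(1 - 2^{-(b-1)m})·2^n`. -/
theorem stmt7 (a b : ℕ) (ha : 0 < a) (hb : 0 < b) (hab : Nat.gcd a b = 1) (hlt : a < b)
    (m : ℕ) (hm : 1 ≤ m) :
    ∀ n : ℕ, 1 ≤ n → ∀ N : ℤ, IsSumOfPowsTwo m N →
      (N : ℝ) < ((a : ℝ) / b) * 2^n →
      (N : ℝ) ≤ ((a : ℝ) / b) * (1 - ((2 : ℝ)^((b - 1) * m))⁻¹) * 2^n :=
  stmt7_general a b ha hlt m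
end

section
/- Let v and m be positive integers and let n ≥ v be an integer. Then for every integer N that is a sum of at most m powers of two: if N < 2^{n−v}, then N ≤ 2^{n−v} − 2^{n−v−m} (where the right-hand side is interpreted as a real number). -/
open Finset

lemma Multiset.exists_card_lt_sum_two_pow_eq {R : Type*} [Semiring R] {l : Multiset ℕ}
    (hl : ¬ l.Nodup) :
    ∃ l' : Multiset ℕ, l'.card < l.card ∧
      (l'.map fun j => (2 : R) ^ j).sum = (l.map fun j => (2 : R) ^ j).sum := by
  obtain ⟨a, t, rfl⟩ : ∃ a t, l = a ::ₘ a ::ₘ t := by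
    simpa [Multiset.nodup_iff_ne_cons_cons] using hl
  refine ⟨(a + 1) ::ₘ t, by simp, ?_⟩
  simp only [Multiset.map_cons, Multiset.sum_cons, pow_succ, mul_two, add_assoc]

lemma Multiset.exists_finset_sum_two_pow_eq {R : Type*} [Semiring R] (l : Multiset ℕ) :
    ∃ S : Finset ℕ, #S ≤ l.card ∧
      ∑ j ∈ S, (2 : R) ^ j = (l.map fun j => (2 : R) ^ j).sum := by
  induction hc : l.card using Nat.strong_induction_on generalizing l with
  | _ c ih =>
    by_cases hl : l.Nodup
    · exact ⟨⟨l, hl⟩, hc.le, rfl⟩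
    obtain ⟨l', hcard, hsum⟩ := Multiset.exists_card_lt_sum_two_pow_eq (R := R) hl
    obtain ⟨S, hS, hSsum⟩ := ih _ (hc ▸ hcard) l' rfl
    exact ⟨S, by omega, hSsum.trans hsum⟩

lemma Finset.sum_two_pow_add_two_pow_sub_le {S : Finset ℕ} {k m : ℕ} (hS : S ⊆ range k)
    (hm : #S ≤ m) : ∑ j ∈ S, 2 ^ j + 2 ^ (k - m) ≤ 2 ^ k := by
  induction k generalizing S m with
  | zero => simp_all
  | succ k ih =>
    rcases m with _ | m
    · simp_all
    rw [Nat.add_sub_add_right, pow_succ]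
    by_cases hk : k ∈ S
    · have hsub : S.erase k ⊆ range k := fun j hj => by
        have := mem_range.mp (hS (mem_of_mem_erase hj))
        exact mem_range.mpr (lt_of_le_of_ne (by omega) (ne_of_mem_erase hj))
      have := ih hsub (m := m) (by rw [card_erase_of_mem hk]; omega)
      rw [← add_sum_erase S _ hk]
      omega
    · have hsub : S ⊆ range k := fun j hj => by
        have := mem_range.mp (hS hj)
        exact mem_range.mpr (lt_of_le_of_ne (by omega) (fun h => hk (h ▸ hj)))
      have := Nat.geomSum_lt le_rfl (fun j hj => mem_range.mp (hsub hj))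
      have : 2 ^ (k - m) ≤ 2 ^ k := Nat.pow_le_pow_right two_pos (Nat.sub_le k m)
      omega

lemma IsSumOfPowsTwo.add_two_pow_sub_le {m k : ℕ} {N : ℤ} (hN : IsSumOfPowsTwo m N)
    (hlt : N < 2 ^ k) : N + 2 ^ (k - m) ≤ 2 ^ k := by
  obtain ⟨l, hl, rfl⟩ := hN
  obtain ⟨S, hS, hsum⟩ := l.exists_finset_sum_two_pow_eq (R := ℤ)
  rw [← hsum] at hlt ⊢
  have hrange : S ⊆ range k := fun j hj => by
    have := (single_le_sum (fun i _ => by positivity) hj).trans_lt hlt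
    exact mem_range.mpr (by exact_mod_cast (pow_lt_pow_iff_right₀ one_lt_two).mp this)
  exact_mod_cast sum_two_pow_add_two_pow_sub_le hrange (hS.trans hl)

theorem stmt8_general (v m : ℕ) (n : ℕ) (hn : v ≤ n) :
    ∀ N : ℤ, IsSumOfPowsTwo m N →
      (N : ℝ) < (2 : ℝ)^((n : ℤ) - v) →
      (N : ℝ) ≤ (2 : ℝ)^((n : ℤ) - v) - (2 : ℝ)^((n : ℤ) - v - m) := by
  intro N hN hlt
  have hk : (n : ℤ) - v = (n - v : ℕ) := by omega
  rw [hk, zpow_natCast] at hlt ⊢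
  have hbound := hN.add_two_pow_sub_le (k := n - v) (by exact_mod_cast hlt)
  have hexp : (2 : ℝ) ^ (((n - v : ℕ) : ℤ) - m) ≤ 2 ^ (n - v - m) := by
    rw [← zpow_natCast]
    exact zpow_le_zpow_right₀ one_le_two (by omega)
  have : (N : ℝ) + 2 ^ (n - v - m) ≤ 2 ^ (n - v) := by exact_mod_cast hbound
  linarith

/-- For positive integers `v, m` and `n ≥ v`: every integer `N` which is a sum of at most `m`
powers of two with `N < 2^{n-v}` satisfies `N ≤ 2^{n-v} - 2^{n-v-m}` (over the reals). -/
theorem stmt8 (v m : ℕ) (hv : 0 < v) (hm : 0 < m) (n : ℕ) (hn : v ≤ n) :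
    ∀ N : ℤ, IsSumOfPowsTwo m N →
      (N : ℝ) < (2 : ℝ)^((n : ℤ) - v) →
      (N : ℝ) ≤ (2 : ℝ)^((n : ℤ) - v) - (2 : ℝ)^((n : ℤ) - v - m) :=
  stmt8_general v m n hn
end

section
/- Let Z and Q be positive integers and let F be a 3-CNF formula on n variables. Then at least one of the following holds: (i) F contains a 0-sunflower (i.e., a variable-disjoint set of clauses) of size Z; (ii) F contains a 1-sunflower of size Q; (iii) there exist m ≤ 7^Z · 3^{3ZQ} 1-CNF formulas F_1, …, F_m on the same n variables such that #SAT(F) = Σ_{i=1}^m #SAT(F_i). -/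
/-!
Take a maximal variable-disjoint family `M ⊆ F`: it has fewer than `Z` clauses and every clause
of `F` meets its variables `V`. Branch first on the values of a model on `V`, with at most `7`
choices per clause of `M`. For each literal `l` on `V` falsified there, take a maximal 1-sunflower
with core `l` among the clauses containing `l` that are not yet satisfied: it has fewer than `Q`
petals, and branching on the at most two remaining literals of each petal costs at most `3`
choices per petal. On each branch every clause not yet satisfied has at most one unassigned
literal, since either it is a petal itself or its petal meets a petal whose variables are all
assigned. So on a branch `F` is equivalent to a 1-CNF, and the branches partition the models of `F`.
-/

open Finset
open scoped Classical

section

variable {n : ℕ}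

def Agrees (A : Fin n → Bool) (P : Clause n) : Prop := ∀ l ∈ P, A l.1 = l.2

def litsOn (A : Fin n → Bool) (W : Finset (Fin n)) : Clause n := W.image fun x => (x, A x)

lemma mem_clVars {C : Clause n} {x : Fin n} : x ∈ clVars C ↔ ∃ l ∈ C, l.1 = x := by
  simp [clVars]

lemma mem_litsOn {A : Fin n → Bool} {W : Finset (Fin n)} {l : Lit n} :
    l ∈ litsOn A W ↔ l.1 ∈ W ∧ A l.1 = l.2 := by
  obtain ⟨x, b⟩ := l
  simp only [litsOn, mem_image, Prod.mk.injEq]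
  constructor
  · rintro ⟨x, hx, rfl, rfl⟩
    exact ⟨hx, rfl⟩
  · rintro ⟨hx, rfl⟩
    exact ⟨x, hx, rfl, rfl⟩

lemma clVars_litsOn (A : Fin n → Bool) (W : Finset (Fin n)) : clVars (litsOn A W) = W := by
  ext x
  simp [clVars, litsOn]

lemma agrees_litsOn (A : Fin n → Bool) (W : Finset (Fin n)) : Agrees A (litsOn A W) :=
  fun _ hl => (mem_litsOn.1 hl).2

lemma agrees_litsOn_iff {A A' : Fin n → Bool} {W : Finset (Fin n)} :
    Agrees A (litsOn A' W) ↔ Set.EqOn A A' W :=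
  ⟨fun h x hx => h (x, A' x) (mem_litsOn.2 ⟨hx, rfl⟩),
    fun h _ hl => (h (mem_litsOn.1 hl).1).trans (mem_litsOn.1 hl).2⟩

lemma litsOn_congr {A A' : Fin n → Bool} {W : Finset (Fin n)} (h : Set.EqOn A A' W) :
    litsOn A W = litsOn A' W :=
  image_congr fun x hx => by rw [h hx]

lemma litsOn_union (A : Fin n → Bool) (V W : Finset (Fin n)) :
    litsOn A (V ∪ W) = litsOn A V ∪ litsOn A W :=
  image_union _ _

lemma litsOn_mono (A : Fin n → Bool) {V W : Finset (Fin n)} (h : V ⊆ W) :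
    litsOn A V ⊆ litsOn A W :=
  image_subset_image h

lemma notMem_clVars_of_disjoint {A : Fin n → Bool} {P C : Clause n} (hA : Agrees A P)
    (hCP : Disjoint C P) {c : Lit n} (hc : c ∈ C) (hAc : A c.1 = c.2) : c.1 ∉ clVars P := by
  intro hx
  obtain ⟨p, hp, hpc⟩ := mem_clVars.1 hx
  have : p = c := Prod.ext hpc (by rw [← hA p hp, hpc, hAc])
  exact disjoint_left.1 hCP hc (this ▸ hp)

def unitCnf (F : Cnf n) (P : Clause n) : Cnf n :=
  (P ∪ (F.filter (Disjoint · P)).biUnion fun C => C.filter (·.1 ∉ clVars P)).image singleton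

lemma card_eq_one_of_mem_unitCnf {F : Cnf n} {P C : Clause n} (hC : C ∈ unitCnf F P) :
    #C = 1 := by
  obtain ⟨l, -, rfl⟩ := mem_image.1 hC
  exact card_singleton l

lemma cnfSat_image_singleton {A : Fin n → Bool} {L : Clause n} :
    cnfSat A (L.image singleton) ↔ Agrees A L := by
  simp only [cnfSat, clauseSat, Agrees, forall_mem_image, mem_singleton, exists_eq_left]

lemma cnfSat_unitCnf_iff {F : Cnf n} {P : Clause n} {A₀ : Fin n → Bool} (hA₀ : cnfSat A₀ F)
    (hPA₀ : Agrees A₀ P) (hfree : ∀ C ∈ F, Disjoint C P → #(C.filter (·.1 ∉ clVars P)) ≤ 1)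
    (A : Fin n → Bool) : cnfSat A (unitCnf F P) ↔ cnfSat A F ∧ Agrees A P := by
  simp only [unitCnf, cnfSat_image_singleton, Agrees, mem_union, mem_biUnion, mem_filter]
  constructor
  · intro h
    refine ⟨fun C hC => ?_, fun l hl => h l (Or.inl hl)⟩
    by_cases hCP : Disjoint C P
    · -- `A₀` satisfies `C` through a literal outside `P`, which `A` is forced to follow
      obtain ⟨c, hc, hA₀c⟩ := hA₀ C hC
      have hcP := notMem_clVars_of_disjoint hPA₀ hCP hc hA₀c
      exact ⟨c, hc, h c (Or.inr ⟨C, ⟨hC, hCP⟩, hc, hcP⟩)⟩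
    · obtain ⟨l, hlC, hlP⟩ := not_disjoint_iff.1 hCP
      exact ⟨l, hlC, h l (Or.inl hlP)⟩
  · rintro ⟨hAF, hAP⟩ l (hl | ⟨C, ⟨hC, hCP⟩, hlC, hlP⟩)
    · exact hAP l hl
    · obtain ⟨c, hc, hAc⟩ := hAF C hC
      have hc' : c ∈ C.filter (·.1 ∉ clVars P) :=
        mem_filter.2 ⟨hc, notMem_clVars_of_disjoint hAP hCP hc hAc⟩
      have hl' : l ∈ C.filter (·.1 ∉ clVars P) := mem_filter.2 ⟨hlC, hlP⟩
      rwa [card_le_one.1 (hfree C hC hCP) l hl' c hc']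

lemma numSat_eq_card (F : Cnf n) : numSat F = #(univ.filter (cnfSat · F)) := by
  rw [numSat, Nat.card_eq_fintype_card, Fintype.card_subtype]

lemma numSat_eq_sum_of_partition {ι : Type*} {F : Cnf n} (I : Finset ι) (G : ι → Cnf n)
    (hcover : ∀ A, cnfSat A F ↔ ∃ i ∈ I, cnfSat A (G i))
    (hdisj : ∀ A, ∀ i ∈ I, ∀ j ∈ I, cnfSat A (G i) → cnfSat A (G j) → i = j) :
    numSat F = ∑ i ∈ I, numSat (G i) := by
  have hunion : univ.filter (cnfSat · F) = I.biUnion fun i => univ.filter (cnfSat · (G i)) := by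
    ext A
    simp [hcover]
  simp only [numSat_eq_card, hunion]
  refine card_biUnion fun i hi j hj hij => disjoint_left.2 fun A hAi hAj => hij ?_
  exact hdisj A i hi j hj (mem_filter.1 hAi).2 (mem_filter.1 hAj).2

noncomputable def branchSet (F : Cnf n) (W : (Fin n → Bool) → Finset (Fin n)) :
    Finset (Clause n) :=
  (univ.filter (cnfSat · F)).image fun A => litsOn A (W A)

/-- `hW` says that `W A` is the set of variables queried by a decision tree on input `A`:
it is determined by the values of `A` it reads. -/
theorem numSat_eq_sum_unitCnf (F : Cnf n) (W : (Fin n → Bool) → Finset (Fin n))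
    (hW : ∀ A A', Set.EqOn A A' (W A') → W A = W A')
    (hfree : ∀ A, cnfSat A F → ∀ C ∈ F, Disjoint C (litsOn A (W A)) →
      #(C.filter (·.1 ∉ W A)) ≤ 1) :
    numSat F = ∑ P ∈ branchSet F W, numSat (unitCnf F P) := by
  have hsat : ∀ A₀, cnfSat A₀ F → ∀ A,
      cnfSat A (unitCnf F (litsOn A₀ (W A₀))) ↔ cnfSat A F ∧ Agrees A (litsOn A₀ (W A₀)) :=
    fun A₀ hA₀ => cnfSat_unitCnf_iff hA₀ (agrees_litsOn A₀ _)
      (by simpa only [clVars_litsOn] using hfree A₀ hA₀)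
  have hbranch : ∀ A A₀, Agrees A (litsOn A₀ (W A₀)) → litsOn A (W A) = litsOn A₀ (W A₀) := by
    intro A A₀ h
    rw [agrees_litsOn_iff] at h
    rw [hW A A₀ h, litsOn_congr h]
  apply numSat_eq_sum_of_partition
  · intro A
    simp only [branchSet, mem_image, mem_filter, mem_univ, true_and]
    constructor
    · intro hA
      exact ⟨_, ⟨A, hA, rfl⟩, (hsat A hA A).2 ⟨hA, agrees_litsOn A _⟩⟩
    · rintro ⟨_, ⟨A₀, hA₀, rfl⟩, h⟩
      exact ((hsat A₀ hA₀ A).1 h).1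
  · intro A i hi j hj hAi hAj
    simp only [branchSet, mem_image, mem_filter, mem_univ, true_and] at hi hj
    obtain ⟨A₁, hA₁, rfl⟩ := hi
    obtain ⟨A₂, hA₂, rfl⟩ := hj
    rw [← hbranch A A₁ ((hsat A₁ hA₁ A).1 hAi).2, hbranch A A₂ ((hsat A₂ hA₂ A).1 hAj).2]

def cnfVars (𝒞 : Finset (Clause n)) : Finset (Fin n) := 𝒞.biUnion clVars

lemma card_image_litsOn_cnfVars_le (𝒞 : Finset (Clause n)) (S : Finset (Fin n → Bool))
    {k : ℕ} (hk : ∀ C ∈ 𝒞, #C ≤ k) (hS : ∀ A ∈ S, ∀ C ∈ 𝒞, clauseSat A C) :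
    #(S.image (litsOn · (cnfVars 𝒞))) ≤ (2 ^ k - 1) ^ #𝒞 := by
  -- `litsOn A (cnfVars 𝒞)` is determined by the literals of each clause made true by `A`,
  -- a nonempty subset of the clause
  let trueLits : Clause n → ∀ C ∈ 𝒞, Clause n := fun E C _ => C.filter (· ∈ E)
  have hmaps : ∀ E ∈ S.image (litsOn · (cnfVars 𝒞)),
      trueLits E ∈ 𝒞.pi fun C => C.powerset.erase ∅ := by
    simp only [mem_image, forall_exists_index, and_imp]
    rintro _ A hA rfl
    refine mem_pi.2 fun C hC => mem_erase.2 ⟨?_, mem_powerset.2 (filter_subset _ _)⟩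
    obtain ⟨l, hl, hAl⟩ := hS A hA C hC
    refine ne_empty_of_mem (a := l) (mem_filter.2 ⟨hl, mem_litsOn.2 ⟨?_, hAl⟩⟩)
    exact mem_biUnion.2 ⟨C, hC, mem_clVars.2 ⟨l, hl, rfl⟩⟩
  have hinj : Set.InjOn trueLits (S.image (litsOn · (cnfVars 𝒞))) := by
    simp only [Set.InjOn, coe_image, Set.mem_image, mem_coe, forall_exists_index, and_imp]
    rintro _ A - rfl _ A' - rfl h
    refine litsOn_congr fun x hx => ?_
    obtain ⟨C, hC, hxC⟩ := mem_biUnion.1 hx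
    obtain ⟨c, hc, rfl⟩ := mem_clVars.1 hxC
    have hc' := congrArg (c ∈ ·) (congrFun₂ h C hC)
    simp only [trueLits, mem_filter, hc, true_and, mem_litsOn, eq_iff_iff] at hc'
    cases hA : A c.1 <;> cases hA' : A' c.1 <;> simp_all
  calc #(S.image (litsOn · (cnfVars 𝒞)))
      ≤ #(𝒞.pi fun C => C.powerset.erase ∅) := card_le_card_of_injOn trueLits hmaps hinj
    _ = ∏ C ∈ 𝒞, (2 ^ #C - 1) := by
      simp only [card_pi, card_erase_of_mem (empty_mem_powerset _), card_powerset]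
    _ ≤ ∏ _C ∈ 𝒞, (2 ^ k - 1) :=
      prod_le_prod' fun C hC => Nat.sub_le_sub_right (Nat.pow_le_pow_right two_pos (hk C hC)) 1
    _ = (2 ^ k - 1) ^ #𝒞 := prod_const _

def stagedVars (V : Finset (Fin n)) (W₂ : Clause n → Finset (Fin n)) (A : Fin n → Bool) :
    Finset (Fin n) :=
  V ∪ W₂ (litsOn A V)

lemma stagedVars_eq_of_eqOn {V : Finset (Fin n)} {W₂ : Clause n → Finset (Fin n)}
    {A A' : Fin n → Bool} (h : Set.EqOn A A' (stagedVars V W₂ A')) :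
    stagedVars V W₂ A = stagedVars V W₂ A' := by
  rw [stagedVars, stagedVars, litsOn_congr (h.mono subset_union_left)]

lemma card_image_litsOn_stagedVars_le (S : Finset (Fin n → Bool)) (V : Finset (Fin n))
    (W₂ : Clause n → Finset (Fin n)) {a b : ℕ} (ha : #(S.image (litsOn · V)) ≤ a)
    (hb : ∀ ρ ∈ S.image (litsOn · V),
      #((S.filter (litsOn · V = ρ)).image (litsOn · (W₂ ρ))) ≤ b) :
    #(S.image fun A => litsOn A (stagedVars V W₂ A)) ≤ a * b := by
  have hsub : (S.image fun A => litsOn A (stagedVars V W₂ A)) ⊆ (S.image (litsOn · V)).biUnion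
      fun ρ => ((S.filter (litsOn · V = ρ)).image (litsOn · (W₂ ρ))).image (ρ ∪ ·) := by
    simp only [subset_iff, mem_image, mem_biUnion, mem_filter, forall_exists_index, and_imp]
    rintro _ A hA rfl
    exact ⟨_, ⟨A, hA, rfl⟩, _, ⟨A, ⟨hA, rfl⟩, rfl⟩, (litsOn_union A _ _).symm⟩
  calc _ ≤ _ := card_le_card hsub
    _ ≤ ∑ ρ ∈ S.image (litsOn · V), b :=
      card_biUnion_le.trans (sum_le_sum fun ρ hρ => card_image_le.trans (hb ρ hρ))
    _ ≤ a * b := by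
      rw [sum_const, smul_eq_mul]
      exact Nat.mul_le_mul_right b ha

def PetalsDisjoint (L : Clause n) (S : Finset (Clause n)) : Prop :=
  ∀ C ∈ S, ∀ C' ∈ S, C ≠ C' → Disjoint (clVars (C \ L)) (clVars (C' \ L))

lemma PetalsDisjoint.mono {L : Clause n} {S T : Finset (Clause n)} (h : PetalsDisjoint L S)
    (hTS : T ⊆ S) : PetalsDisjoint L T :=
  fun C hC C' hC' => h C (hTS hC) C' (hTS hC')

lemma card_lt_of_not_isSunflower {F : Cnf n} {K w : ℕ}
    (hF : ¬ ∃ S ⊆ F, #S = K ∧ isSunflower S w) {L : Clause n} {S : Finset (Clause n)}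
    (hSF : S ⊆ F) (hL : #L = w) (hLS : ∀ C ∈ S, L ⊆ C) (hS : PetalsDisjoint L S) : #S < K := by
  by_contra! hK
  obtain ⟨T, hTS, hT⟩ := exists_subset_card_eq hK
  exact hF ⟨T, hTS.trans hSF, hT, L, hL, fun C hC => hLS C (hTS hC), hS.mono hTS⟩

lemma exists_maximal_petalsDisjoint (L : Clause n) (F : Cnf n) :
    ∃ S, Maximal (fun S => S ⊆ F ∧ PetalsDisjoint L S) S :=
  (Set.toFinite {S | S ⊆ F ∧ PetalsDisjoint L S}).exists_maximal
    ⟨∅, empty_subset F, fun C hC => absurd hC (notMem_empty C)⟩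

lemma exists_not_disjoint_of_maximal {L : Clause n} {F S : Cnf n} {C : Clause n}
    (hS : Maximal (fun S => S ⊆ F ∧ PetalsDisjoint L S) S) (hC : C ∈ F) (hCS : C ∉ S) :
    ∃ D ∈ S, ¬ Disjoint (clVars (C \ L)) (clVars (D \ L)) := by
  by_contra! h
  have hins : insert C S ⊆ F ∧ PetalsDisjoint L (insert C S) := by
    refine ⟨insert_subset hC hS.1.1, ?_⟩
    simp only [PetalsDisjoint, mem_insert]
    rintro C₁ (rfl | h₁) C₂ (rfl | h₂) h₁₂
    · exact absurd rfl h₁₂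
    · exact h C₂ h₂
    · exact (h C₁ h₁).symm
    · exact hS.1.2 C₁ h₁ C₂ h₂ h₁₂
  exact hCS (hS.2 hins (subset_insert C S) (mem_insert_self C S))

def negLit (l : Lit n) : Lit n := (l.1, !l.2)

lemma mem_image_negLit_litsOn {A : Fin n → Bool} {V : Finset (Fin n)} {l : Lit n} :
    l ∈ (litsOn A V).image negLit ↔ l.1 ∈ V ∧ A l.1 ≠ l.2 := by
  obtain ⟨x, b⟩ := l
  simp only [mem_image, mem_litsOn, negLit, Prod.exists, Prod.mk.injEq, ne_eq]
  constructor
  · rintro ⟨x, b, ⟨hx, rfl⟩, rfl, rfl⟩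
    simpa using hx
  · rintro ⟨hx, hb⟩
    exact ⟨x, !b, ⟨hx, by cases b <;> simpa using hb⟩, rfl, Bool.not_not b⟩

def activeClauses (F : Cnf n) (ρ : Clause n) (l : Lit n) : Cnf n :=
  F.filter fun C => l ∈ C ∧ Disjoint C ρ

def freePart (V : Finset (Fin n)) (C : Clause n) : Clause n := C.filter (·.1 ∉ V)

def secondStage (V : Finset (Fin n)) (SS : Clause n → Lit n → Cnf n) (ρ : Clause n) : Cnf n :=
  ((ρ.image negLit).biUnion (SS ρ)).image (freePart V)

def branchVars (M : Cnf n) (SS : Clause n → Lit n → Cnf n) : (Fin n → Bool) → Finset (Fin n) :=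
  stagedVars (cnfVars M) fun ρ => cnfVars (secondStage (cnfVars M) SS ρ)

section Branching

variable {F M : Cnf n} {SS : Clause n → Lit n → Cnf n}

lemma exists_mem_cnfVars_of_maximal (hM : Maximal (fun S => S ⊆ F ∧ PetalsDisjoint ∅ S) M)
    {C : Clause n} (hC : C ∈ F) {l : Lit n} (hl : l ∈ C) : ∃ l' ∈ C, l'.1 ∈ cnfVars M := by
  by_cases hCM : C ∈ M
  · exact ⟨l, hl, mem_biUnion.2 ⟨C, hCM, mem_clVars.2 ⟨l, hl, rfl⟩⟩⟩
  obtain ⟨D, hD, hCD⟩ := exists_not_disjoint_of_maximal hM hC hCM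
  obtain ⟨x, hxC, hxD⟩ := not_disjoint_iff.1 hCD
  rw [sdiff_empty] at hxC hxD
  obtain ⟨l', hl', rfl⟩ := mem_clVars.1 hxC
  exact ⟨l', hl', mem_biUnion.2 ⟨D, hD, hxD⟩⟩

lemma clVars_subset_branchVars {A : Fin n → Bool} {l : Lit n}
    (hl : l ∈ (litsOn A (cnfVars M)).image negLit) {D : Clause n}
    (hD : D ∈ SS (litsOn A (cnfVars M)) l) : clVars D ⊆ branchVars M SS A := by
  intro x hx
  by_cases hxM : x ∈ cnfVars M
  · exact mem_union_left _ hxM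
  refine mem_union_right _ (mem_biUnion.2 ⟨freePart (cnfVars M) D, ?_, ?_⟩)
  · exact mem_image_of_mem _ (mem_biUnion.2 ⟨l, hl, hD⟩)
  · obtain ⟨d, hd, rfl⟩ := mem_clVars.1 hx
    exact mem_clVars.2 ⟨d, mem_filter.2 ⟨hd, hxM⟩, rfl⟩

lemma card_filter_notMem_branchVars_le_one (h3 : ∀ C ∈ F, #C ≤ 3)
    (hM : Maximal (fun S => S ⊆ F ∧ PetalsDisjoint ∅ S) M)
    (hSS : ∀ ρ l, Maximal (fun S => S ⊆ activeClauses F ρ l ∧ PetalsDisjoint {l} S) (SS ρ l))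
    {A : Fin n → Bool} (hA : cnfSat A F) {C : Clause n} (hC : C ∈ F)
    (hCA : Disjoint C (litsOn A (branchVars M SS A))) :
    #(C.filter (·.1 ∉ branchVars M SS A)) ≤ 1 := by
  set ρ := litsOn A (cnfVars M)
  obtain ⟨l, hl, -⟩ := hA C hC
  obtain ⟨l₀, hl₀C, hl₀M⟩ := exists_mem_cnfVars_of_maximal hM hC hl
  have hCρ : Disjoint C ρ := hCA.mono_right (litsOn_mono A subset_union_left)
  have hl₀ : l₀ ∈ ρ.image negLit := mem_image_negLit_litsOn.2
    ⟨hl₀M, fun h => disjoint_left.1 hCρ hl₀C (mem_litsOn.2 ⟨hl₀M, h⟩)⟩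
  have hCact : C ∈ activeClauses F ρ l₀ := mem_filter.2 ⟨hC, hl₀C, hCρ⟩
  by_cases hCS : C ∈ SS ρ l₀
  · have hsub := clVars_subset_branchVars hl₀ hCS
    rw [filter_false_of_mem fun l hl => not_not.2 (hsub (mem_clVars.2 ⟨l, hl, rfl⟩))]
    exact zero_le_one
  -- otherwise the petal `C \ {l₀}` meets an already chosen petal, whose variables are assigned
  obtain ⟨D, hD, hCD⟩ := exists_not_disjoint_of_maximal (hSS ρ l₀) hCact hCS
  obtain ⟨y, hyC, hyD⟩ := not_disjoint_iff.1 hCD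
  obtain ⟨c, hc, rfl⟩ := mem_clVars.1 hyC
  have hcy : c.1 ∈ branchVars M SS A := clVars_subset_branchVars hl₀ hD
    (image_subset_image sdiff_subset hyD)
  have hc' : c ∈ C.erase l₀ := by simpa [and_comm] using hc
  have hsub : C.filter (·.1 ∉ branchVars M SS A) ⊆ (C.erase l₀).erase c := by
    intro l hl
    obtain ⟨hlC, hlW⟩ := mem_filter.1 hl
    exact mem_erase.2 ⟨fun h => hlW (h ▸ hcy),
      mem_erase.2 ⟨fun h => hlW (h ▸ mem_union_left _ hl₀M), hlC⟩⟩
  calc _ ≤ #((C.erase l₀).erase c) := card_le_card hsub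
    _ = #C - 1 - 1 := by rw [card_erase_of_mem hc', card_erase_of_mem hl₀C]
    _ ≤ 1 := by have := h3 C hC; omega

end Branching

lemma card_freePart_le {V : Finset (Fin n)} {D : Clause n} {l : Lit n} (hlD : l ∈ D)
    (hlV : l.1 ∈ V) : #(freePart V D) ≤ #D - 1 := by
  rw [← card_erase_of_mem hlD]
  exact card_le_card fun d hd => mem_erase.2
    ⟨fun h => (mem_filter.1 hd).2 (h ▸ hlV), (mem_filter.1 hd).1⟩

lemma clauseSat_freePart {A : Fin n → Bool} {V : Finset (Fin n)} {D : Clause n}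
    (hA : clauseSat A D) (hD : Disjoint D (litsOn A V)) : clauseSat A (freePart V D) := by
  obtain ⟨d, hd, hAd⟩ := hA
  exact ⟨d, mem_filter.2 ⟨hd, fun hdV => disjoint_left.1 hD hd (mem_litsOn.2 ⟨hdV, hAd⟩)⟩, hAd⟩

lemma card_secondStage_le {V : Finset (Fin n)} {SS : Clause n → Lit n → Cnf n} {ρ : Clause n}
    {b : ℕ} (hb : ∀ l, #(SS ρ l) ≤ b) : #(secondStage V SS ρ) ≤ #ρ * b :=
  calc #(secondStage V SS ρ) ≤ ∑ l ∈ ρ.image negLit, #(SS ρ l) :=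
        card_image_le.trans card_biUnion_le
    _ ≤ #(ρ.image negLit) * b := by
        rw [← smul_eq_mul, ← sum_const]
        exact sum_le_sum fun l _ => hb l
    _ ≤ #ρ * b := Nat.mul_le_mul_right b card_image_le

lemma card_litsOn_cnfVars_le (A : Fin n → Bool) {M : Cnf n} {k : ℕ} (hk : ∀ C ∈ M, #C ≤ k) :
    #(litsOn A (cnfVars M)) ≤ k * #M :=
  calc #(litsOn A (cnfVars M)) ≤ ∑ C ∈ M, #(clVars C) := card_image_le.trans card_biUnion_le
    _ ≤ ∑ _C ∈ M, k := sum_le_sum fun C hC => card_image_le.trans (hk C hC)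
    _ = k * #M := by rw [sum_const, smul_eq_mul, mul_comm]

lemma card_branchSet_le {F M : Cnf n} {SS : Clause n → Lit n → Cnf n} {b : ℕ}
    (h3 : ∀ C ∈ F, #C ≤ 3) (hMF : M ⊆ F) (hSSF : ∀ ρ l, SS ρ l ⊆ activeClauses F ρ l)
    (hb : ∀ ρ l, #(SS ρ l) ≤ b) :
    #(branchSet F (branchVars M SS)) ≤ 7 ^ #M * 3 ^ (3 * #M * b) := by
  set S := univ.filter (cnfSat · F)
  have hSF : ∀ A ∈ S, cnfSat A F := fun A hA => (mem_filter.1 hA).2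
  apply card_image_litsOn_stagedVars_le
  · exact card_image_litsOn_cnfVars_le M S (k := 3) (fun C hC => h3 C (hMF hC))
      fun A hA C hC => hSF A hA C (hMF hC)
  · simp only [mem_image]
    rintro ρ ⟨A₀, -, rfl⟩
    set ρ := litsOn A₀ (cnfVars M)
    have hstage : ∀ D' ∈ secondStage (cnfVars M) SS ρ, ∃ l ∈ ρ.image negLit,
        ∃ D ∈ activeClauses F ρ l, D' = freePart (cnfVars M) D := by
      simp only [secondStage, mem_image, mem_biUnion]
      rintro _ ⟨D, ⟨l, hl, hD⟩, rfl⟩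
      exact ⟨l, hl, D, hSSF ρ l hD, rfl⟩
    calc _ ≤ (2 ^ 2 - 1) ^ #(secondStage (cnfVars M) SS ρ) := by
          refine card_image_litsOn_cnfVars_le _ _ (fun D' hD' => ?_) fun A hA D' hD' => ?_
          · obtain ⟨l, hl, D, hD, rfl⟩ := hstage D' hD'
            obtain ⟨hDF, hlD, -⟩ := mem_filter.1 hD
            have := card_freePart_le hlD (mem_image_negLit_litsOn.1 hl).1
            have := h3 D hDF
            omega
          · obtain ⟨l, -, D, hD, rfl⟩ := hstage D' hD'
            obtain ⟨hDF, -, hDρ⟩ := mem_filter.1 hD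
            obtain ⟨hA, hAρ⟩ := mem_filter.1 hA
            exact clauseSat_freePart (hSF A hA D hDF) (hAρ ▸ hDρ)
      _ ≤ 3 ^ (3 * #M * b) := by
          refine Nat.pow_le_pow_right (by norm_num) ?_
          refine (card_secondStage_le fun l => hb ρ l).trans (Nat.mul_le_mul_right b ?_)
          exact card_litsOn_cnfVars_le A₀ fun C hC => h3 C (hMF hC)

theorem exists_unitCnf_decomposition {F : Cnf n} {a b : ℕ} (h3 : ∀ C ∈ F, #C ≤ 3)
    (ha : ∀ S ⊆ F, PetalsDisjoint ∅ S → #S ≤ a)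
    (hb : ∀ l S, S ⊆ F → (∀ C ∈ S, l ∈ C) → PetalsDisjoint {l} S → #S ≤ b) :
    ∃ (m : ℕ) (G : Fin m → Cnf n), m ≤ 7 ^ a * 3 ^ (3 * a * b) ∧
      (∀ i, ∀ C ∈ G i, #C = 1) ∧ numSat F = ∑ i, numSat (G i) := by
  obtain ⟨M, hM⟩ := exists_maximal_petalsDisjoint ∅ F
  choose SS hSS using fun ρ l => exists_maximal_petalsDisjoint {l} (activeClauses F ρ l)
  have hSSF : ∀ ρ l, SS ρ l ⊆ activeClauses F ρ l := fun ρ l => (hSS ρ l).1.1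
  have hSSb : ∀ ρ l, #(SS ρ l) ≤ b := fun ρ l => hb l _ ((hSSF ρ l).trans (filter_subset _ _))
    (fun C hC => (mem_filter.1 (hSSF ρ l hC)).2.1) (hSS ρ l).1.2
  have hsum := numSat_eq_sum_unitCnf F (branchVars M SS) (fun _ _ => stagedVars_eq_of_eqOn)
    fun _ hA _ hC => card_filter_notMem_branchVars_le_one h3 hM hSS hA hC
  set B := branchSet F (branchVars M SS)
  refine ⟨#B, fun i => unitCnf F (B.equivFin.symm i), ?_,
    fun i C hC => card_eq_one_of_mem_unitCnf hC, ?_⟩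
  · calc #B ≤ 7 ^ #M * 3 ^ (3 * #M * b) := card_branchSet_le h3 hM.1.1 hSSF hSSb
      _ ≤ 7 ^ a * 3 ^ (3 * a * b) := by
        have hMa := ha M hM.1.1 hM.1.2
        gcongr <;> norm_num
  · rw [hsum, ← sum_coe_sort B]
    exact (Equiv.sum_comp B.equivFin.symm _).symm

end

theorem stmt9_general (Z Q n : ℕ)
    (F : Cnf n) (h3 : ∀ C ∈ F, C.card ≤ 3) :
    (∃ S ⊆ F, S.card = Z ∧ isSunflower S 0) ∨
    (∃ S ⊆ F, S.card = Q ∧ isSunflower S 1) ∨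
    (∃ (m : ℕ) (G : Fin m → Cnf n), m ≤ 7^Z * 3^(3 * Z * Q) ∧
      (∀ i : Fin m, ∀ C ∈ G i, C.card = 1) ∧
      numSat F = ∑ i : Fin m, numSat (G i)) := by
  by_cases h0 : ∃ S ⊆ F, S.card = Z ∧ isSunflower S 0
  · exact Or.inl h0
  by_cases h1 : ∃ S ⊆ F, S.card = Q ∧ isSunflower S 1
  · exact Or.inr (Or.inl h1)
  refine Or.inr (Or.inr (exists_unitCnf_decomposition h3 (fun S hSF hS => ?_)
    fun l S hSF hlS hS => ?_))
  · exact (card_lt_of_not_isSunflower h0 hSF card_empty (fun C _ => empty_subset C) hS).le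
  · exact (card_lt_of_not_isSunflower h1 hSF (card_singleton l)
      (fun C hC => singleton_subset_iff.2 (hlS C hC)) hS).le

/-- Sunflower extraction for 3-CNFs: every 3-CNF on `n` variables either contains a
0-sunflower of size `Z`, or a 1-sunflower of size `Q`, or its satisfying assignments are
counted exactly by a list of at most `7^Z · 3^{3ZQ}` 1-CNFs. -/
theorem stmt9 (Z Q n : ℕ) (hZ : 0 < Z) (hQ : 0 < Q)
    (F : Cnf n) (h3 : ∀ C ∈ F, C.card ≤ 3) :
    (∃ S ⊆ F, S.card = Z ∧ isSunflower S 0) ∨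
    (∃ S ⊆ F, S.card = Q ∧ isSunflower S 1) ∨
    (∃ (m : ℕ) (G : Fin m → Cnf n), m ≤ 7^Z * 3^(3 * Z * Q) ∧
      (∀ i : Fin m, ∀ C ∈ G i, C.card = 1) ∧
      numSat F = ∑ i : Fin m, numSat (G i)) :=
  stmt9_general Z Q n F h3
end

section
/- Let ψ be a CNF formula consisting of m pairwise distinct nonempty clauses, each of width at most w, such that every literal occurs in at most P clauses of ψ. Then ψ contains a variable-disjoint set of at least ⌈m/(2wP)⌉ clauses. -/
/-! A maximal variable-disjoint subset `D ⊆ ψ` meets the variables of every clause of `ψ`.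
A clause of width at most `w` has at most `w` variables, hence at most `2w` literals over its
variables, each of which lies in at most `P` clauses; so every clause of `D` shares a variable
with at most `2wP` clauses of `ψ`, and `m ≤ 2wP · |D|`. -/

namespace Clause

variable {n : ℕ}

theorem clVars_nonempty {C : Clause n} (hC : C.Nonempty) : (clVars C).Nonempty :=
  hC.image Prod.fst

theorem card_clVars_le (C : Clause n) : (clVars C).card ≤ C.card :=
  Finset.card_image_le

theorem filter_not_disjoint_clVars_subset (ψ : Cnf n) (C' : Clause n) :
    ψ.filter (fun C => ¬Disjoint (clVars C) (clVars C')) ⊆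
      (clVars C' ×ˢ Finset.univ).biUnion (fun l => ψ.filter (fun C => l ∈ C)) := by
  intro C hC
  obtain ⟨hCψ, hmeet⟩ := Finset.mem_filter.mp hC
  obtain ⟨x, hxC, hxC'⟩ := Finset.not_disjoint_iff.mp hmeet
  obtain ⟨⟨y, b⟩, hl, rfl⟩ := Finset.mem_image.mp hxC
  exact Finset.mem_biUnion.mpr
    ⟨(y, b), Finset.mem_product.mpr ⟨hxC', Finset.mem_univ _⟩, Finset.mem_filter.mpr ⟨hCψ, hl⟩⟩

theorem card_filter_not_disjoint_clVars_le {ψ : Cnf n} {P : ℕ}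
    (hP : ∀ l : Lit n, (ψ.filter (fun C => l ∈ C)).card ≤ P) (C' : Clause n) :
    (ψ.filter (fun C => ¬Disjoint (clVars C) (clVars C'))).card ≤ 2 * C'.card * P :=
  calc (ψ.filter (fun C => ¬Disjoint (clVars C) (clVars C'))).card
      ≤ ((clVars C' ×ˢ Finset.univ).biUnion (fun l => ψ.filter (fun C => l ∈ C))).card :=
        Finset.card_le_card (filter_not_disjoint_clVars_subset ψ C')
    _ ≤ ∑ l ∈ clVars C' ×ˢ (Finset.univ : Finset Bool), (ψ.filter (fun C => l ∈ C)).card :=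
        Finset.card_biUnion_le
    _ ≤ (clVars C' ×ˢ (Finset.univ : Finset Bool)).card * P :=
        Finset.sum_le_card_nsmul _ _ _ (fun l _ => hP l)
    _ ≤ 2 * C'.card * P := by
        rw [Finset.card_product, Finset.card_univ, Fintype.card_bool, mul_comm _ 2]
        gcongr
        exact card_clVars_le C'

end Clause

namespace varDisjoint

variable {n : ℕ}

theorem insert {D : Finset (Clause n)} (hD : varDisjoint D) {C : Clause n}
    (hC : ∀ C' ∈ D, Disjoint (clVars C) (clVars C')) : varDisjoint (insert C D) := by
  intro A hA B hB hAB
  rcases Finset.mem_insert.mp hA with rfl | hAD <;> rcases Finset.mem_insert.mp hB with rfl | hBD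
  · exact absurd rfl hAB
  · exact hC B hBD
  · exact (hC A hAD).symm
  · exact hD A hAD B hBD hAB

/-- Take a variable-disjoint subset of maximal size: a clause sharing no variable with it
could be added to it. -/
theorem exists_subset_forall_not_disjoint (ψ : Cnf n) (hne : ∀ C ∈ ψ, C.Nonempty) :
    ∃ D ⊆ ψ, varDisjoint D ∧ ∀ C ∈ ψ, ∃ C' ∈ D, ¬Disjoint (clVars C) (clVars C') := by
  classical
  obtain ⟨D, hDmem, hDmax⟩ := (ψ.powerset.filter varDisjoint).exists_max_image Finset.card
    ⟨∅, Finset.mem_filter.mpr ⟨Finset.empty_mem_powerset ψ, fun _ h => absurd h (by simp)⟩⟩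
  obtain ⟨hDψ, hD⟩ := Finset.mem_filter.mp hDmem
  rw [Finset.mem_powerset] at hDψ
  refine ⟨D, hDψ, hD, fun C hC => ?_⟩
  by_contra! hfree
  have hCD : C ∉ D := fun hCD =>
    (Clause.clVars_nonempty (hne C hC)).ne_empty
      (Finset.disjoint_self_iff_empty _ |>.mp (hfree C hCD))
  have hmax := hDmax (Insert.insert C D)
    (Finset.mem_filter.mpr ⟨Finset.mem_powerset.mpr (Finset.insert_subset hC hDψ), hD.insert hfree⟩)
  rw [Finset.card_insert_of_notMem hCD] at hmax
  omega

end varDisjoint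

theorem card_le_card_mul_of_forall_not_disjoint {n w P : ℕ} {ψ D : Cnf n} (hDψ : D ⊆ ψ)
    (hcover : ∀ C ∈ ψ, ∃ C' ∈ D, ¬Disjoint (clVars C) (clVars C'))
    (hwidth : ∀ C ∈ ψ, C.card ≤ w) (hP : ∀ l : Lit n, (ψ.filter (fun C => l ∈ C)).card ≤ P) :
    ψ.card ≤ D.card * (2 * w * P) := by
  have hsub : ψ ⊆ D.biUnion (fun C' => ψ.filter (fun C => ¬Disjoint (clVars C) (clVars C'))) :=
    fun C hC =>
      let ⟨C', hC', hmeet⟩ := hcover C hC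
      Finset.mem_biUnion.mpr ⟨C', hC', Finset.mem_filter.mpr ⟨hC, hmeet⟩⟩
  calc ψ.card
      ≤ (D.biUnion (fun C' => ψ.filter (fun C => ¬Disjoint (clVars C) (clVars C')))).card :=
        Finset.card_le_card hsub
    _ ≤ ∑ C' ∈ D, (ψ.filter (fun C => ¬Disjoint (clVars C) (clVars C'))).card :=
        Finset.card_biUnion_le
    _ ≤ D.card * (2 * w * P) := Finset.sum_le_card_nsmul _ _ _ fun C' hC' =>
        (Clause.card_filter_not_disjoint_clVars_le hP C').trans
          (by gcongr; exact hwidth C' (hDψ hC'))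

/-- If `ψ` consists of `m` pairwise distinct nonempty clauses of width at most `w`, and every
literal occurs in at most `P` clauses, then `ψ` contains a variable-disjoint set of at least
`⌈m/(2wP)⌉` clauses. -/
theorem stmt13 (n w P m : ℕ) (ψ : Cnf n) (hm : ψ.card = m)
    (hne : ∀ C ∈ ψ, C.Nonempty) (hwidth : ∀ C ∈ ψ, C.card ≤ w)
    (hP : ∀ l : Lit n, (ψ.filter (fun C => l ∈ C)).card ≤ P) :
    ∃ D ⊆ ψ, varDisjoint D ∧ ⌈(m : ℚ) / (2 * w * P)⌉₊ ≤ D.card := by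
  obtain ⟨D, hDψ, hD, hcover⟩ := varDisjoint.exists_subset_forall_not_disjoint ψ hne
  have hmD : (m : ℚ) ≤ D.card * (2 * w * P) := by
    exact_mod_cast hm ▸ card_le_card_mul_of_forall_not_disjoint hDψ hcover hwidth hP
  exact ⟨D, hDψ, hD, Nat.ceil_le.mpr (div_le_of_le_mul₀ (by positivity) (by positivity) hmD)⟩
end

section
/- Let F be a CNF formula with clauses C_1, …, C_m over variables x_1, …, x_n, let t ≥ 1 be an integer with t ≤ n + 1, and let x_{n+1}, y_1, …, y_t be fresh variables. Let F' be the CNF over the n + 1 + t variables whose clauses are C_i ∪ {x_{n+1}} for 1 ≤ i ≤ m together with the clause (¬x_{n+1} ∨ y_1 ∨ ⋯ ∨ y_t). Then #SAT(F') = 2^t·#SAT(F) + 2^{n+t} − 2^n, and #SAT(F') ≥ 2^{n+t} if and only if #SAT(F) ≥ 2^{n−t}. -/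
section Satisfaction

variable {α : Type*} {n : ℕ} {A : Fin n → Bool}

lemma clauseSat_insert (l : Lit n) (C : Clause n) :
    clauseSat A (insert l C) ↔ A l.1 = l.2 ∨ clauseSat A C :=
  Finset.exists_mem_insert _ _ _

lemma clauseSat_image (f : α → Lit n) (s : Finset α) :
    clauseSat A (s.image f) ↔ ∃ a ∈ s, A (f a).1 = (f a).2 :=
  Finset.exists_mem_image

lemma cnfSat_insert (C : Clause n) (F : Cnf n) :
    cnfSat A (insert C F) ↔ clauseSat A C ∧ cnfSat A F :=
  Finset.forall_mem_insert _ _ _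

lemma cnfSat_image (f : α → Clause n) (s : Finset α) :
    cnfSat A (s.image f) ↔ ∀ a ∈ s, clauseSat A (f a) :=
  Finset.forall_mem_image

end Satisfaction

lemma Nat.card_subtype_fst {β γ : Type*} [Finite γ] (p : β → Prop) :
    Nat.card {x : β × γ // p x.1} = Nat.card {b // p b} * Nat.card γ := by
  rw [Nat.card_congr Equiv.prodSubtypeFstEquivSubtypeProd, Nat.card_prod]

lemma Nat.card_subtype_snd {β γ : Type*} [Finite β] (q : γ → Prop) :
    Nat.card {x : β × γ // q x.2} = Nat.card β * Nat.card {c // q c} := by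
  have e : {x : β × γ // q x.2} ≃ {x : γ × β // q x.1} :=
    (Equiv.prodComm β γ).subtypeEquiv fun _ => Iff.rfl
  rw [Nat.card_congr e, Nat.card_subtype_fst, mul_comm]

lemma Nat.card_subtype_exists_eq_true {ι : Type*} [Fintype ι] :
    Nat.card {y : ι → Bool // ∃ i, y i = true} = 2 ^ Fintype.card ι - 1 := by
  have hne (y : ι → Bool) : (∃ i, y i = true) ↔ ¬y = fun _ => false := by
    simp [funext_iff]
  classical
  rw [Nat.card_congr (Equiv.subtypeEquivRight hne), Nat.card_eq_fintype_card,
    Fintype.card_subtype_compl, Fintype.card_subtype_eq, Fintype.card_fun, Fintype.card_bool]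

section Padding

variable {n t : ℕ}

/-- In `Fin (n + 1 + t)`, `x_i` is `Fin.castAdd t i.castSucc`, `x_{n+1}` is
`Fin.castAdd t (Fin.last n)` and `y_j` is `Fin.natAdd (n + 1) j`. -/
def padCnf (F : Cnf n) (t : ℕ) : Cnf (n + 1 + t) :=
  insert
    (insert (Fin.castAdd t (Fin.last n), false)
      (Finset.univ.image fun j : Fin t => (Fin.natAdd (n + 1) j, true)))
    (F.image fun C => insert (Fin.castAdd t (Fin.last n), true)
      (C.image fun l => (Fin.castAdd t l.1.castSucc, l.2)))

def padAssignmentEquiv :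
    Bool × (Fin n → Bool) × (Fin t → Bool) ≃ (Fin (n + 1 + t) → Bool) :=
  (Equiv.prodAssoc _ _ _).symm.trans
    ((Equiv.prodCongr (Fin.snocEquiv fun _ => Bool) (Equiv.refl _)).trans
      (Fin.appendEquiv (n + 1) t))

@[simp] lemma padAssignmentEquiv_castSucc (b : Bool) (B : Fin n → Bool) (y : Fin t → Bool)
    (i : Fin n) : padAssignmentEquiv (b, B, y) (Fin.castAdd t i.castSucc) = B i := by
  simp [padAssignmentEquiv, Fin.appendEquiv]

@[simp] lemma padAssignmentEquiv_last (b : Bool) (B : Fin n → Bool) (y : Fin t → Bool) :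
    padAssignmentEquiv (b, B, y) (Fin.castAdd t (Fin.last n)) = b := by
  simp [padAssignmentEquiv, Fin.appendEquiv]

@[simp] lemma padAssignmentEquiv_natAdd (b : Bool) (B : Fin n → Bool) (y : Fin t → Bool)
    (j : Fin t) : padAssignmentEquiv (b, B, y) (Fin.natAdd (n + 1) j) = y j := by
  simp [padAssignmentEquiv, Fin.appendEquiv]

def PadSat (F : Cnf n) : Bool → (Fin n → Bool) × (Fin t → Bool) → Prop
  | false, (B, _) => cnfSat B F
  | true, (_, y) => ∃ j, y j = true

lemma cnfSat_padCnf_iff (F : Cnf n) (b : Bool) (B : Fin n → Bool) (y : Fin t → Bool) :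
    cnfSat (padAssignmentEquiv (b, B, y)) (padCnf F t) ↔ PadSat F b (B, y) := by
  simp only [padCnf, cnfSat_insert, cnfSat_image, clauseSat_insert, clauseSat_image,
    padAssignmentEquiv_last, padAssignmentEquiv_natAdd, padAssignmentEquiv_castSucc,
    Finset.mem_univ, true_and]
  cases b <;> simp [PadSat, cnfSat, clauseSat]

lemma numSat_padCnf (F : Cnf n) (t : ℕ) :
    numSat (padCnf F t) = 2 ^ t * numSat F + (2 ^ (n + t) - 2 ^ n) := by
  calc numSat (padCnf F t)
      = Nat.card {p : Bool × (Fin n → Bool) × (Fin t → Bool) // PadSat F p.1 p.2} :=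
        (Nat.card_congr <|
          padAssignmentEquiv.subtypeEquiv fun _ => (cnfSat_padCnf_iff ..).symm).symm
    _ = Nat.card (Σ b, {x // PadSat F b x}) :=
        Nat.card_congr (Equiv.subtypeProdEquivSigmaSubtype _)
    _ = Nat.card {x : (Fin n → Bool) × (Fin t → Bool) // cnfSat x.1 F} +
          Nat.card {x : (Fin n → Bool) × (Fin t → Bool) // ∃ j, x.2 j = true} := by
        rw [Nat.card_sigma, Fintype.sum_bool, add_comm]; rfl
    _ = 2 ^ t * numSat F + (2 ^ (n + t) - 2 ^ n) := by
        rw [Nat.card_subtype_fst (cnfSat · F),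
          Nat.card_subtype_snd (β := Fin n → Bool) (fun y : Fin t → Bool => ∃ j, y j = true),
          Nat.card_subtype_exists_eq_true]
        simp [numSat, Nat.mul_sub_one, pow_add, mul_comm]

end Padding

lemma two_pow_le_add_sub_iff (n t s : ℕ) :
    2 ^ (n + t) ≤ 2 ^ t * s + (2 ^ (n + t) - 2 ^ n) ↔ (2 : ℝ) ^ ((n : ℤ) - t) ≤ s := by
  have hle : 2 ^ n ≤ 2 ^ (n + t) := Nat.pow_le_pow_right two_pos (Nat.le_add_right n t)
  calc 2 ^ (n + t) ≤ 2 ^ t * s + (2 ^ (n + t) - 2 ^ n) ↔ 2 ^ n ≤ 2 ^ t * s := by omega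
    _ ↔ ((2 ^ n : ℕ) : ℝ) ≤ ((2 ^ t * s : ℕ) : ℝ) := Nat.cast_le.symm
    _ ↔ (2 : ℝ) ^ ((n : ℤ) - t) ≤ s := by
        rw [zpow_sub₀ two_ne_zero, div_le_iff₀ (by positivity), zpow_natCast, zpow_natCast]
        push_cast
        rw [mul_comm]

theorem stmt16_general (n t : ℕ) (F : Cnf n)
    (F' : Cnf (n + 1 + t))
    (hF' : F' = insert
        (insert ((Fin.castAdd t (Fin.last n) : Fin (n + 1 + t)), false)
          (Finset.image (fun j : Fin t => ((Fin.natAdd (n + 1) j : Fin (n + 1 + t)), true))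
            Finset.univ))
        (F.image fun C => insert ((Fin.castAdd t (Fin.last n) : Fin (n + 1 + t)), true)
            (C.image fun l => ((Fin.castAdd t l.1.castSucc : Fin (n + 1 + t)), l.2)))) :
    numSat F' = 2^t * numSat F + (2^(n + t) - 2^n) ∧
    (2^(n + t) ≤ numSat F' ↔ (2 : ℝ)^((n : ℤ) - (t : ℤ)) ≤ (numSat F : ℝ)) := by
  have hcount : numSat F' = 2 ^ t * numSat F + (2 ^ (n + t) - 2 ^ n) := by
    rw [hF']
    exact numSat_padCnf F t
  exact ⟨hcount, hcount ▸ two_pow_le_add_sub_iff n t (numSat F)⟩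

/-- For `F` over `n` variables, fresh variables `x_{n+1}, y_1, …, y_t` (`1 ≤ t ≤ n+1`), and
`F'` over `n+1+t` variables with clauses `C_i ∪ {x_{n+1}}` together with
`(¬x_{n+1} ∨ y_1 ∨ ⋯ ∨ y_t)`, we have `#SAT(F') = 2^t·#SAT(F) + 2^{n+t} - 2^n`, and
`#SAT(F') ≥ 2^{n+t}` iff `#SAT(F) ≥ 2^{n-t}`. -/
theorem stmt16 (n t : ℕ) (ht : 1 ≤ t) (htn : t ≤ n + 1) (F : Cnf n)
    (F' : Cnf (n + 1 + t))
    (hF' : F' = insert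
        (insert ((Fin.castAdd t (Fin.last n) : Fin (n + 1 + t)), false)
          (Finset.image (fun j : Fin t => ((Fin.natAdd (n + 1) j : Fin (n + 1 + t)), true))
            Finset.univ))
        (F.image fun C => insert ((Fin.castAdd t (Fin.last n) : Fin (n + 1 + t)), true)
            (C.image fun l => ((Fin.castAdd t l.1.castSucc : Fin (n + 1 + t)), l.2)))) :
    numSat F' = 2^t * numSat F + (2^(n + t) - 2^n) ∧
    (2^(n + t) ≤ numSat F' ↔ (2 : ℝ)^((n : ℤ) - (t : ℤ)) ≤ (numSat F : ℝ)) :=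
  stmt16_general n t F F' hF'
end

section
/- Let v ≥ 2, m ≥ 1, and n ≥ 1 be integers. Then for every integer N that is a sum of at most m powers of two: if N < 2^n/(2^v − 1), then N ≤ (1 − 2^{−mv}) · 2^n/(2^v − 1). -/
theorem Multiset.exists_finset_card_le_sum_two_pow_eq {R : Type*} [Semiring R] (l : Multiset ℕ) :
    ∃ s : Finset ℕ, s.card ≤ Multiset.card l ∧
      ∑ i ∈ s, (2 : R) ^ i = (l.map fun j => (2 : R) ^ j).sum := by
  induction hl : Multiset.card l using Nat.strong_induction_on generalizing l with
  | _ c ih =>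
  by_cases hnd : l.Nodup
  · exact ⟨⟨l, hnd⟩, hl.le, rfl⟩
  obtain ⟨a, ha⟩ : ∃ a, 1 < l.count a := by
    simpa [Multiset.nodup_iff_count_le_one] using hnd
  obtain ⟨t, rfl⟩ := Multiset.le_iff_exists_add.mp
    (Multiset.le_count_iff_replicate_le.mp ha : Multiset.replicate 2 a ≤ l)
  obtain ⟨s, hs, hsum⟩ := ih _ (by simp [← hl]) ((a + 1) ::ₘ t) rfl
  refine ⟨s, by simp at hs hl ⊢; omega, ?_⟩
  rw [hsum]
  simp [Multiset.replicate_succ, pow_succ, mul_two, add_assoc]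

theorem add_le_of_two_pow_sub_one_mul_two_pow_lt {v a n : ℕ} (hv : 1 ≤ v)
    (h : ((2 : ℤ) ^ v - 1) * 2 ^ a < 2 ^ n) : a + v ≤ n := by
  have hv' : (2 : ℤ) ^ v = 2 * 2 ^ (v - 1) := by rw [← pow_succ']; congr 1; omega
  have hv1 : (1 : ℤ) ≤ 2 ^ (v - 1) := one_le_pow₀ (by norm_num)
  have : (2 : ℤ) ^ (a + (v - 1)) < 2 ^ n := by
    rw [pow_add]; nlinarith [pow_pos (two_pos : (0 : ℤ) < 2) a]
  have := (pow_lt_pow_iff_right₀ (by norm_num : (1 : ℤ) < 2)).mp this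
  omega

theorem two_pow_le_pow_mul_sub_mul_geomSum {v : ℕ} (hv : 1 ≤ v) (s : Finset ℕ) {m n : ℕ}
    (hs : s.card ≤ m) (h : ((2 : ℤ) ^ v - 1) * ∑ i ∈ s, 2 ^ i < 2 ^ n) :
    (2 : ℤ) ^ n ≤ 2 ^ (m * v) * (2 ^ n - (2 ^ v - 1) * ∑ i ∈ s, 2 ^ i) := by
  induction s using Finset.induction_on_max generalizing m n with
  | empty =>
    rw [Finset.sum_empty, mul_zero, sub_zero]
    exact le_mul_of_one_le_left (by positivity) (one_le_pow₀ (by norm_num))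
  | insert a s ha ih =>
  have haS : a ∉ s := fun h => (ha a h).false
  have hS : ∑ i ∈ s, (2 : ℤ) ^ i < 2 ^ a := by exact_mod_cast Nat.geomSum_lt le_rfl ha
  rw [Finset.sum_insert haS] at h ⊢
  rw [Finset.card_insert_of_notMem haS] at hs
  obtain ⟨m, rfl⟩ : ∃ m', m = m' + 1 := ⟨m - 1, by omega⟩
  rw [add_one_mul, pow_add]
  have hS0 : 0 ≤ ∑ i ∈ s, (2 : ℤ) ^ i := by positivity
  set S := ∑ i ∈ s, (2 : ℤ) ^ i
  have hc : (0 : ℤ) ≤ 2 ^ v - 1 := sub_nonneg.mpr (one_le_pow₀ (by norm_num))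
  have hav : a + v ≤ n :=
    add_le_of_two_pow_sub_one_mul_two_pow_lt hv (by nlinarith [mul_nonneg hc hS0])
  rcases hav.lt_or_eq with hlt | rfl
  · obtain ⟨k, rfl⟩ : ∃ k, n = a + 1 + k + v := ⟨n - (a + 1) - v, by omega⟩
    have hN : 2 ^ a + S ≤ 2 ^ (a + 1 + k) := by
      have : (2 : ℤ) ^ (a + 1) ≤ 2 ^ (a + 1 + k) := pow_le_pow_right₀ (by norm_num) (by omega)
      rw [pow_succ] at this; linarith
    rw [pow_add _ (a + 1 + k) v, mul_assoc]
    generalize (2 : ℤ) ^ (a + 1 + k) = P at hN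
    have hgap : P ≤ P * 2 ^ v - (2 ^ v - 1) * (2 ^ a + S) := by
      nlinarith [mul_le_mul_of_nonneg_left hN hc]
    calc P * 2 ^ v ≤ 2 ^ v * (P * 2 ^ v - (2 ^ v - 1) * (2 ^ a + S)) :=
          (mul_comm _ _).trans_le (mul_le_mul_of_nonneg_left hgap (by positivity))
      _ ≤ _ := le_mul_of_one_le_left (by nlinarith [pow_pos (two_pos : (0 : ℤ) < 2) a])
          (one_le_pow₀ (by norm_num))
  · have hgap : (2 : ℤ) ^ (a + v) - (2 ^ v - 1) * (2 ^ a + S) = 2 ^ a - (2 ^ v - 1) * S := by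
      rw [pow_add]; ring
    have := ih (m := m) (n := a) (by omega) (by rw [pow_add] at h; linarith)
    rw [hgap, pow_add]
    calc (2 : ℤ) ^ a * 2 ^ v ≤ 2 ^ (m * v) * (2 ^ a - (2 ^ v - 1) * S) * 2 ^ v := by gcongr
      _ = _ := by ring

theorem stmt19_general (v m n : ℕ) (hv : 2 ≤ v) :
    ∀ N : ℤ, IsSumOfPowsTwo m N →
      (N : ℝ) < 2^n / (2^v - 1) →
      (N : ℝ) ≤ (1 - ((2 : ℝ)^(m * v))⁻¹) * (2^n / (2^v - 1)) := by
  rintro N ⟨l, hl, rfl⟩ hN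
  obtain ⟨s, hs, hsum⟩ := l.exists_finset_card_le_sum_two_pow_eq (R := ℤ)
  rw [← hsum] at hN ⊢
  have hc : (0 : ℝ) < 2 ^ v - 1 := by
    linarith [one_lt_pow₀ (one_lt_two : (1 : ℝ) < 2) (by omega : v ≠ 0)]
  rw [lt_div_iff₀ hc] at hN
  have key : (2 : ℝ) ^ n ≤ 2 ^ (m * v) * (2 ^ n - (2 ^ v - 1) * ((∑ i ∈ s, 2 ^ i : ℤ) : ℝ)) := by
    exact_mod_cast two_pow_le_pow_mul_sub_mul_geomSum (by omega : 1 ≤ v) s (hs.trans hl)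
      (by rw [mul_comm]; exact_mod_cast hN)
  rw [mul_div_assoc', le_div_iff₀ hc, sub_mul, one_mul]
  linarith [(inv_mul_le_iff₀ (by positivity)).mpr key]

/-- For integers `v ≥ 2`, `m ≥ 1`, `n ≥ 1`: every integer `N` which is a sum of at most `m`
powers of two with `N < 2^n/(2^v - 1)` satisfies `N ≤ (1 - 2^{-mv})·2^n/(2^v - 1)`. -/
theorem stmt19 (v m n : ℕ) (hv : 2 ≤ v) (hm : 1 ≤ m) (hn : 1 ≤ n) :
    ∀ N : ℤ, IsSumOfPowsTwo m N →
      (N : ℝ) < 2^n / (2^v - 1) →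
      (N : ℝ) ≤ (1 - ((2 : ℝ)^(m * v))⁻¹) * (2^n / (2^v - 1)) :=
  stmt19_general v m n hv
end
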